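/- Let y_1 < y_2 < ... < y_k be real numbers with 0 < y_1, y_k ≤ 2π, nondecreasing gaps y_1 ≤ y_2 − y_1 ≤ ... ≤ y_k − y_{k−1}, an index q with y_q ≤ π < y_{q+1}, and a := y_{q+1} − y_q < π. If (a_j)_{j=1}^{k} is a nonincreasing sequence of nonnegative reals, then ∑_{i=1}^{k} a_i sin(y_i) ≥ −a_{q+1} · sin(a/2). -/

import Mathlib

/-!
Let `A = y_{q+1} - y_q` and `S_n = ∑_{i ≤ n} sin y_i`. Both
`L_t(x) = (cos (t/2) - cos (x + t/2)) / (2 sin (t/2))` and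
`U_t(x) = (1 - cos (x + t/2)) / (2 sin (t/2))` are discrete primitives of `sin` with step `t`:
`L_t(x) - L_t(x - t) = sin x = U_t(x) - U_t(x - t)`. Moreover `L_t(0) = 0` and `L_t(x)` decreases
in `t ∈ (0, 2π)`, while `U_t ≥ 0` and `U_t(x)` decreases in `t ≤ π` at points `x ≥ π`.
Telescoping along the points, with the step equal to the current gap (the gaps only grow),
gives `S_q ≥ L_A(y_q)` and `∑_{q < i ≤ n} sin y_i ≥ -U_A(y_q)`. Since
`U_A - L_A = (1 - cos (A/2)) / (2 sin (A/2)) ≤ sin (A/2)` for `A ≤ π`, every `S_n` with `n > q`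
is at least `-sin (A/2)`. Abel summation against the nonincreasing weights, the terms before
`q + 1` being nonnegative, gives the claim.
-/

open Real Finset

noncomputable def lowerSinPrimitive (t x : ℝ) : ℝ :=
  (cos (t / 2) - cos (x + t / 2)) / (2 * sin (t / 2))

noncomputable def upperSinPrimitive (t x : ℝ) : ℝ :=
  (1 - cos (x + t / 2)) / (2 * sin (t / 2))

lemma sin_half_pos {t : ℝ} (h0 : 0 < t) (h2π : t < 2 * π) : 0 < sin (t / 2) :=
  sin_pos_of_pos_of_lt_pi (half_pos h0) (by linarith)

lemma cos_sub_half_sub_cos_add_half (x t : ℝ) :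
    cos (x - t / 2) - cos (x + t / 2) = 2 * sin x * sin (t / 2) := by
  rw [cos_sub_cos, show (x - t / 2 + (x + t / 2)) / 2 = x by ring,
    show (x - t / 2 - (x + t / 2)) / 2 = -(t / 2) by ring, sin_neg]
  ring

@[simp]
lemma lowerSinPrimitive_zero (t : ℝ) : lowerSinPrimitive t 0 = 0 := by
  simp [lowerSinPrimitive]

lemma lowerSinPrimitive_sub_sub (x : ℝ) {t : ℝ} (ht : sin (t / 2) ≠ 0) :
    lowerSinPrimitive t x - lowerSinPrimitive t (x - t) = sin x := by
  rw [lowerSinPrimitive, lowerSinPrimitive, div_sub_div_same, sub_sub_sub_cancel_left,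
    show x - t + t / 2 = x - t / 2 by ring, cos_sub_half_sub_cos_add_half]
  field_simp

lemma upperSinPrimitive_sub_sub (x : ℝ) {t : ℝ} (ht : sin (t / 2) ≠ 0) :
    upperSinPrimitive t x - upperSinPrimitive t (x - t) = sin x := by
  rw [upperSinPrimitive, upperSinPrimitive, div_sub_div_same, sub_sub_sub_cancel_left,
    show x - t + t / 2 = x - t / 2 by ring, cos_sub_half_sub_cos_add_half]
  field_simp

lemma upperSinPrimitive_nonneg (x : ℝ) {t : ℝ} (ht : 0 ≤ sin (t / 2)) :
    0 ≤ upperSinPrimitive t x :=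
  div_nonneg (by linarith [cos_le_one (x + t / 2)]) (by positivity)

lemma antitoneOn_cot : AntitoneOn cot (Set.Ioo 0 π) := by
  intro s hs t ht hst
  have hs' : 0 < sin s := sin_pos_of_pos_of_lt_pi hs.1 hs.2
  have ht' : 0 < sin t := sin_pos_of_pos_of_lt_pi ht.1 ht.2
  have : 0 ≤ sin (t - s) := sin_nonneg_of_nonneg_of_le_pi (by linarith) (by linarith [hs.1, ht.2])
  rw [sin_sub] at this
  rw [cot_eq_cos_div_sin, cot_eq_cos_div_sin, div_le_div_iff₀ ht' hs']
  linarith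

lemma lowerSinPrimitive_eq_cot (x : ℝ) {t : ℝ} (ht : sin (t / 2) ≠ 0) :
    lowerSinPrimitive t x = (1 - cos x) / 2 * cot (t / 2) + sin x / 2 := by
  rw [lowerSinPrimitive, cot_eq_cos_div_sin, cos_add]
  field_simp
  ring

lemma lowerSinPrimitive_antitoneOn (x : ℝ) :
    AntitoneOn (lowerSinPrimitive · x) (Set.Ioo 0 (2 * π)) := by
  intro s hs t ht hst
  have half_mem : ∀ u ∈ Set.Ioo 0 (2 * π), u / 2 ∈ Set.Ioo 0 π := fun u hu =>
    ⟨by linarith [hu.1], by linarith [hu.2]⟩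
  simp only [lowerSinPrimitive_eq_cot x (sin_half_pos hs.1 hs.2).ne',
    lowerSinPrimitive_eq_cot x (sin_half_pos ht.1 ht.2).ne']
  gcongr
  · linarith [cos_le_one x]
  · exact antitoneOn_cot (half_mem s hs) (half_mem t ht) (by linarith)

lemma upperSinPrimitive_eq_sq_div (t x : ℝ) :
    upperSinPrimitive t x = sin (x / 2 + t / 4) ^ 2 / sin (t / 2) := by
  rw [upperSinPrimitive, sin_sq_eq_half_sub, show 2 * (x / 2 + t / 4) = x + t / 2 by ring,
    ← div_div]
  ring

lemma upperSinPrimitive_le_of_le {x s t : ℝ} (hx : π ≤ x) (hs : 0 < s) (hst : s ≤ t)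
    (htπ : t ≤ π) (hxt : x + t / 2 ≤ 2 * π) :
    upperSinPrimitive t x ≤ upperSinPrimitive s x := by
  rw [upperSinPrimitive_eq_sq_div, upperSinPrimitive_eq_sq_div]
  have hnum : sin (x / 2 + t / 4) ≤ sin (x / 2 + s / 4) := by
    rw [← sin_pi_sub, ← sin_pi_sub (x / 2 + s / 4)]
    exact sin_le_sin_of_le_of_le_pi_div_two (by linarith) (by linarith) (by linarith)
  have hden : sin (s / 2) ≤ sin (t / 2) :=
    sin_le_sin_of_le_of_le_pi_div_two (by linarith) (by linarith) (by linarith)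
  have := sin_half_pos hs (by linarith)
  have : 0 ≤ sin (x / 2 + t / 4) := sin_nonneg_of_nonneg_of_le_pi (by linarith) (by linarith)
  gcongr

lemma upperSinPrimitive_sub_lowerSinPrimitive_le (x : ℝ) {t : ℝ} (ht0 : 0 < t)
    (htπ : t ≤ π) :
    upperSinPrimitive t x - lowerSinPrimitive t x ≤ sin (t / 2) := by
  rw [upperSinPrimitive, lowerSinPrimitive, div_sub_div_same, sub_sub_sub_cancel_right,
    div_le_iff₀ (by linarith [sin_half_pos ht0 (by linarith)])]
  have hcos : cos t ≤ cos (t / 2) :=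
    cos_le_cos_of_nonneg_of_le_pi (by linarith) (by linarith) (by linarith)
  have hsq := sin_sq_eq_half_sub (t / 2)
  rw [show 2 * (t / 2) = t by ring] at hsq
  nlinarith

lemma lowerSinPrimitive_le_sum_sin (x : ℕ → ℝ) (hx0 : x 0 = 0) {m : ℕ}
    (hpos : ∀ i < m, 0 < fwdDiff 1 x i) (hmono : MonotoneOn (fwdDiff 1 x) (Set.Iio m))
    {t : ℝ} (ht : ∀ i < m, fwdDiff 1 x i ≤ t) (ht2π : t < 2 * π) :
    lowerSinPrimitive t (x m) ≤ ∑ i ∈ range (m + 1), sin (x i) := by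
  induction m generalizing t with
  | zero => simp [hx0]
  | succ m ih =>
    set γ := fwdDiff 1 x m
    have hγ0 : 0 < γ := hpos m m.lt_succ_self
    have hγt : γ ≤ t := ht m m.lt_succ_self
    have hprev : lowerSinPrimitive γ (x m) ≤ ∑ i ∈ range (m + 1), sin (x i) :=
      ih (fun i hi => hpos i (by omega)) (hmono.mono (Set.Iio_subset_Iio m.le_succ))
        (fun i hi => hmono (Set.mem_Iio.2 (by omega)) (Set.mem_Iio.2 (by omega)) hi.le)
        (by linarith)
    have hstep := lowerSinPrimitive_sub_sub (x (m + 1)) (sin_half_pos hγ0 (by linarith)).ne'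
    rw [show x (m + 1) - γ = x m by simp [γ, fwdDiff]] at hstep
    have hanti := lowerSinPrimitive_antitoneOn (x (m + 1)) ⟨hγ0, by linarith⟩
      ⟨by linarith, ht2π⟩ hγt
    rw [sum_range_succ]
    linarith

lemma monotoneOn_fwdDiff_comp_add {x : ℕ → ℝ} {j d : ℕ}
    (h : MonotoneOn (fwdDiff 1 x) (Set.Iio (d + j))) :
    MonotoneOn (fwdDiff 1 fun i => x (i + j)) (Set.Iio d) := by
  intro a ha b hb hab
  simp only [fwdDiff_comp_add]
  exact h (Set.mem_Iio.2 (by simp at ha; omega)) (Set.mem_Iio.2 (by simp at hb; omega)) (by omega)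

lemma neg_upperSinPrimitive_le_sum_sin (x : ℕ → ℝ) {d : ℕ} (hπ : π ≤ x 0)
    (h2π : ∀ i ≤ d, x i ≤ 2 * π) (hmono : MonotoneOn (fwdDiff 1 x) (Set.Iio d))
    {g : ℝ} (hg0 : 0 < g) (hgπ : g ≤ π) (hg : ∀ i < d, g ≤ fwdDiff 1 x i) :
    -upperSinPrimitive g (x 0 - g) ≤ ∑ i ∈ range (d + 1), sin (x i) := by
  induction d generalizing x g with
  | zero =>
    have := upperSinPrimitive_sub_sub (x 0) (sin_half_pos hg0 (by linarith)).ne'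
    have := upperSinPrimitive_nonneg (x 0) (sin_half_pos hg0 (by linarith)).le
    simp only [zero_add, sum_range_one]
    linarith
  | succ d ih =>
    set γ := fwdDiff 1 x 0
    have hγ : g ≤ γ := hg 0 d.succ_pos
    have hx1 : x 1 = x 0 + γ := by simp [γ, fwdDiff]
    have hγπ : γ ≤ π := by linarith [h2π 1 (by omega)]
    have htail : -upperSinPrimitive γ (x 0) ≤ ∑ i ∈ range (d + 1), sin (x (i + 1)) := by
      have := ih (fun i => x (i + 1)) (by linarith) (fun i hi => h2π (i + 1) (by omega))
        (monotoneOn_fwdDiff_comp_add hmono) (by linarith) hγπ fun i hi => by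
          rw [fwdDiff_comp_add]
          exact hmono (Set.mem_Iio.2 (by omega)) (Set.mem_Iio.2 (by omega)) (by omega)
      rwa [show x (0 + 1) - γ = x 0 by simp [hx1]] at this
    have hanti := upperSinPrimitive_le_of_le hπ hg0 hγ hγπ (by linarith [h2π 1 (by omega)])
    have hstep := upperSinPrimitive_sub_sub (x 0) (sin_half_pos hg0 (by linarith)).ne'
    rw [sum_range_succ']
    linarith

lemma neg_sin_half_le_sum_sin (x : ℕ → ℝ) (hx0 : x 0 = 0) {q n : ℕ} (hqn : q < n)
    (hpos : ∀ i < n, 0 < fwdDiff 1 x i) (hmono : MonotoneOn (fwdDiff 1 x) (Set.Iio n))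
    (h2π : x n ≤ 2 * π) (hq : π < x (q + 1)) (hA : fwdDiff 1 x q ≤ π) :
    -sin (fwdDiff 1 x q / 2) ≤ ∑ i ∈ range (n + 1), sin (x i) := by
  obtain ⟨d, rfl⟩ := Nat.exists_eq_add_of_lt hqn
  set A := fwdDiff 1 x q
  have hA0 : 0 < A := hpos q hqn
  have hx : MonotoneOn x (Set.Iic (q + d + 1)) :=
    monotoneOn_of_le_add_one Set.ordConnected_Iic fun i _ _ hi =>
      (sub_pos.1 (hpos i (Set.mem_Iic.1 hi))).le
  have hlow : lowerSinPrimitive A (x q) ≤ ∑ i ∈ range (q + 1), sin (x i) :=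
    lowerSinPrimitive_le_sum_sin x hx0 (fun i hi => hpos i (by omega))
      (hmono.mono (Set.Iio_subset_Iio (by omega)))
      (fun i hi => hmono (Set.mem_Iio.2 (by omega)) (Set.mem_Iio.2 (by omega)) hi.le) (by linarith)
  have hup : -upperSinPrimitive A (x q) ≤ ∑ i ∈ range (d + 1), sin (x (i + (q + 1))) := by
    have := neg_upperSinPrimitive_le_sum_sin (fun i => x (i + (q + 1))) (d := d)
      (by simpa using hq.le)
      (fun i hi => (hx (Set.mem_Iic.2 (by omega)) (Set.mem_Iic.2 le_rfl) (by omega)).trans h2π)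
      (monotoneOn_fwdDiff_comp_add (hmono.mono (Set.Iio_subset_Iio (by omega)))) hA0 hA
      fun i hi => by
        rw [fwdDiff_comp_add]
        exact hmono (Set.mem_Iio.2 (by omega)) (Set.mem_Iio.2 (by omega)) (by omega)
    rwa [show x (0 + (q + 1)) - A = x q by simp [A, fwdDiff]] at this
  have hgap := upperSinPrimitive_sub_lowerSinPrimitive_le (x q) hA0 hA
  rw [show q + d + 1 + 1 = q + 1 + (d + 1) by ring, sum_range_add]
  simp only [add_comm (q + 1)]
  linarith

lemma neg_mul_le_sum_mul_of_neg_le_sum {s a : ℕ → ℝ} {c : ℝ} {p k : ℕ} (hp : 1 ≤ p)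
    (hpk : p ≤ k) (ha : AntitoneOn a (Set.Icc 1 k)) (hak : 0 ≤ a k)
    (hs : ∀ i, 1 ≤ i → i < p → 0 ≤ s i)
    (hS : ∀ n, p ≤ n → n ≤ k → -c ≤ ∑ i ∈ Icc 1 n, s i) :
    -(a p * c) ≤ ∑ i ∈ Icc 1 k, a i * s i := by
  have hpartial : ∀ n, p ≤ n → n ≤ k →
      a n * (∑ i ∈ Icc 1 n, s i + c) - a p * c ≤ ∑ i ∈ Icc 1 n, a i * s i := by
    intro n hpn
    induction n, hpn using Nat.le_induction with
    | base =>
      intro hpk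
      have : a p * ∑ i ∈ Icc 1 p, s i ≤ ∑ i ∈ Icc 1 p, a i * s i := by
        rw [mul_sum]
        refine sum_le_sum fun i hi => ?_
        obtain ⟨hi1, hip⟩ := mem_Icc.1 hi
        rcases hip.lt_or_eq with hip | rfl
        · exact mul_le_mul_of_nonneg_right
            (ha ⟨hi1, by omega⟩ ⟨hp, hpk⟩ hip.le) (hs i hi1 hip)
        · rfl
      linarith
    | succ n hpn ih =>
      intro hnk
      have hanti :
          a (n + 1) * (∑ i ∈ Icc 1 n, s i + c) ≤ a n * (∑ i ∈ Icc 1 n, s i + c) :=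
        mul_le_mul_of_nonneg_right (ha ⟨by omega, by omega⟩ ⟨by omega, hnk⟩ n.le_succ)
          (by linarith [hS n hpn (by omega)])
      rw [sum_Icc_succ_top (by omega), sum_Icc_succ_top (by omega)]
      linarith [ih (by omega)]
  nlinarith [hpartial k hpk le_rfl, mul_nonneg hak (neg_le_iff_add_nonneg.1 (hS k hpk le_rfl))]

lemma neg_sin_half_le_sum_Icc_sin (y : ℕ → ℝ) {q n : ℕ} (hq1 : 1 ≤ q) (hqn : q < n)
    (hmono : ∀ i, 1 ≤ i → i < n → y i < y (i + 1)) (hpos : 0 < y 1) (hlast : y n ≤ 2 * π)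
    (hgap1 : y 1 ≤ y 2 - y 1)
    (hgaps : ∀ i, 2 ≤ i → i < n → y i - y (i - 1) ≤ y (i + 1) - y i)
    (hsplit : π < y (q + 1)) (ha : y (q + 1) - y q ≤ π) :
    -sin ((y (q + 1) - y q) / 2) ≤ ∑ i ∈ Icc 1 n, sin (y i) := by
  -- prepending the point `x 0 = 0` turns `hgap1` into an ordinary gap condition
  set x : ℕ → ℝ := Function.update y 0 0
  have hx0 : x 0 = 0 := Function.update_self ..
  have hxy : ∀ i, 1 ≤ i → x i = y i := fun i hi => Function.update_of_ne (by omega) _ _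
  have hA : fwdDiff 1 x q = y (q + 1) - y q := by simp [fwdDiff, hxy, hq1]
  have hgap_pos : ∀ i < n, 0 < fwdDiff 1 x i := by
    rintro (_ | i) hi
    · simpa [fwdDiff, x] using hpos
    · simpa [fwdDiff, hxy] using hmono (i + 1) (by omega) hi
  have hgap_mono : MonotoneOn (fwdDiff 1 x) (Set.Iio n) := by
    refine monotoneOn_of_le_add_one Set.ordConnected_Iio ?_
    rintro (_ | i) _ _ hi
    · simpa [fwdDiff, x] using hgap1
    · have h := hgaps (i + 2) (by omega) (by simp at hi; omega)
      rw [show i + 2 - 1 = i + 1 by omega] at h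
      show x (i + 1 + 1) - x (i + 1) ≤ x (i + 1 + 1 + 1) - x (i + 1 + 1)
      rwa [hxy _ (by omega), hxy _ (by omega), hxy _ (by omega)]
  have hsum : ∑ i ∈ Icc 1 n, sin (y i) = ∑ i ∈ range (n + 1), sin (x i) := by
    rw [range_eq_Ico, sum_eq_sum_Ico_succ_bot (by omega : 0 < n + 1), zero_add,
      Ico_add_one_right_eq_Icc, hx0, sin_zero, zero_add]
    exact sum_congr rfl fun i hi => by rw [hxy i (mem_Icc.1 hi).1]
  rw [hsum, ← hA]
  exact neg_sin_half_le_sum_sin x hx0 hqn hgap_pos hgap_mono (by rwa [hxy n (by omega)])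
    (by rwa [hxy (q + 1) (by omega)]) (hA ▸ ha)

theorem stmt3 (k q : ℕ) (y : ℕ → ℝ) (hq1 : 1 ≤ q) (hqk : q < k)
    (hmono : ∀ i, 1 ≤ i → i < k → y i < y (i + 1))
    (hpos : 0 < y 1) (hlast : y k ≤ 2 * Real.pi)
    (hgap1 : y 1 ≤ y 2 - y 1)
    (hgaps : ∀ i, 2 ≤ i → i < k → y i - y (i - 1) ≤ y (i + 1) - y i)
    (hsplitq : y q ≤ Real.pi) (hsplitq1 : Real.pi < y (q + 1))
    (ha : y (q + 1) - y q < Real.pi)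
    (a : ℕ → ℝ) (hann : ∀ i, 1 ≤ i → i ≤ k → 0 ≤ a i)
    (hadec : ∀ i, 1 ≤ i → i < k → a (i + 1) ≤ a i) :
    -(a (q + 1) * Real.sin ((y (q + 1) - y q) / 2)) ≤
      ∑ i ∈ Finset.Icc 1 k, a i * Real.sin (y i) := by
  have hy : MonotoneOn y (Set.Icc 1 k) :=
    monotoneOn_of_le_add_one Set.ordConnected_Icc fun i _ hi hi1 =>
      (hmono i hi.1 (by simp at hi1; omega)).le
  refine neg_mul_le_sum_mul_of_neg_le_sum (by omega) hqk
    (antitoneOn_of_add_one_le Set.ordConnected_Icc fun i _ hi hi1 =>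
      hadec i hi.1 (by simp at hi1; omega)) (hann k (by omega) le_rfl) ?_ ?_
  · intro i hi1 hiq
    exact sin_nonneg_of_nonneg_of_le_pi
      (hpos.trans_le (hy ⟨le_rfl, by omega⟩ ⟨hi1, by omega⟩ hi1)).le
      ((hy ⟨hi1, by omega⟩ ⟨hq1, hqk.le⟩ (by omega)).trans hsplitq)
  · intro n hqn hnk
    exact neg_sin_half_le_sum_Icc_sin y hq1 hqn (fun i h1 h2 => hmono i h1 (by omega)) hpos
      ((hy ⟨by omega, hnk⟩ ⟨by omega, le_rfl⟩ hnk).trans hlast) hgap1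
      (fun i h1 h2 => hgaps i h1 (by omega)) hsplitq1 ha.le
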